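/- The n-tangle is invariant under SLOCC operations: if ψ is a pure 2n-qubit state with vectorization |ψ⟩, A_1,...,A_{2n} ∈ SL(2,ℂ) are 2×2 complex matrices of determinant 1, and φ is the 2n-qubit tensor with vectorization |φ⟩ = (A_1 ⊗ ... ⊗ A_{2n})|ψ⟩, then τ_n(φ) = τ_n(ψ), where τ_n is extended to arbitrary (not necessarily normalized) tensors by the same formula. In particular, τ_n is invariant under local unitary transformations U_1 ⊗ ... ⊗ U_{2n} with each U_k ∈ SU(2). -/

import Mathlib

/-- The `k`-th bit (big-endian, `0`-based) of an index `j`, so that for `j < 2^n`,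
`j = Σ_k (bit j k) · 2^{n-1-k}` (lexicographic order of bit strings). -/
def qbit (n : ℕ) (j : ℕ) (k : Fin n) : Fin 2 :=
  ⟨j / 2 ^ (n - 1 - (k : ℕ)) % 2, by omega⟩

/-- The vectorization `|ψ⟩ ∈ ℂ^{4^n}` of a `2n`-qubit tensor, listing the entries in
lexicographic order of the binary index `j = Σ_k i_k 2^{2n−k}`. -/
noncomputable def vecQ (n : ℕ) (ψ : (Fin (2 * n) → Fin 2) → ℂ) : Fin (4 ^ n) → ℂ :=
  fun j => ψ (qbit (2 * n) (j : ℕ))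

/-- The second Pauli matrix `σ_y = [[0, −i], [i, 0]]`. -/
noncomputable def pauliY : Matrix (Fin 2) (Fin 2) ℂ :=
  !![0, -Complex.I; Complex.I, 0]

/-- The Kronecker product `A_1 ⊗ ... ⊗ A_{2n}` of 2×2 matrices as a `4^n × 4^n` matrix
(indices encoded lexicographically by their `2n` bits). -/
noncomputable def kronPowQ (n : ℕ) (A : Fin (2 * n) → Matrix (Fin 2) (Fin 2) ℂ) :
    Matrix (Fin (4 ^ n)) (Fin (4 ^ n)) ℂ :=
  fun i j => ∏ k : Fin (2 * n), A k (qbit (2 * n) (i : ℕ) k) (qbit (2 * n) (j : ℕ) k)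

/-- The `n`-tangle of an arbitrary (not necessarily normalized) `2n`-qubit tensor `χ`:
`τ_n(χ) = |⟨χ| σ_y^{⊗2n} |χ*⟩|²`. -/
noncomputable def nTangle (n : ℕ) (χ : (Fin (2 * n) → Fin 2) → ℂ) : ℝ :=
  norm
      (dotProduct (fun j => (starRingEnd ℂ) (vecQ n χ j))
        ((kronPowQ n fun _ => pauliY).mulVec (fun j => (starRingEnd ℂ) (vecQ n χ j)))) ^ 2

/-!
Conjugating `|φ⟩ = K|ψ⟩` with `K = ⊗ₖ Aₖ` gives `|φ*⟩ = K̄|ψ*⟩`, so the bilinear form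
`⟨φ*|σ_y^{⊗2n}|φ*⟩` equals that of `K̄ᵀ σ_y^{⊗2n} K̄ = ⊗ₖ (Āₖᵀ σ_y Āₖ)` at `|ψ*⟩`. For every
`2 × 2` matrix `M` one has `Mᵀ σ_y M = det M • σ_y`, and `det Āₖ = 1`.
-/

open Matrix

namespace Matrix

variable {ι l m n R S F : Type*} [Fintype ι]

theorem dotProduct_mulVec_mulVec [Fintype m] [Fintype n] [CommSemiring R]
    (K : Matrix m n R) (Y : Matrix m m R) (v w : n → R) :
    K *ᵥ v ⬝ᵥ Y *ᵥ (K *ᵥ w) = v ⬝ᵥ (Kᵀ * Y * K) *ᵥ w := by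
  rw [← vecMul_transpose, ← dotProduct_mulVec, mulVec_mulVec, mulVec_mulVec, Matrix.mul_assoc]

def piKron [CommMonoid R] (A : ι → Matrix m n R) : Matrix (ι → m) (ι → n) R :=
  of fun f g => ∏ k, A k (f k) (g k)

theorem piKron_mul [DecidableEq ι] [Fintype m] [CommSemiring R]
    (A : ι → Matrix l m R) (B : ι → Matrix m n R) :
    piKron A * piKron B = piKron fun k => A k * B k := by
  ext f g
  simp only [piKron, mul_apply, of_apply, ← Finset.prod_mul_distrib]
  rw [Finset.prod_univ_sum, Fintype.piFinset_univ]

theorem piKron_transpose [CommMonoid R] (A : ι → Matrix m n R) :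
    (piKron A)ᵀ = piKron fun k => (A k)ᵀ := rfl

theorem piKron_map [CommMonoid R] [CommMonoid S] [FunLike F R S] [MonoidHomClass F R S]
    (f : F) (A : ι → Matrix m n R) :
    (piKron A).map f = piKron fun k => (A k).map f := by
  ext; simp [piKron, map_prod]

end Matrix

theorem transpose_mul_pauliY_mul_self (M : Matrix (Fin 2) (Fin 2) ℂ) :
    Mᵀ * pauliY * M = M.det • pauliY := by
  ext i j
  fin_cases i <;> fin_cases j <;>
    simp [pauliY, det_fin_two, mul_apply, Fin.sum_univ_two] <;> ring

-- `finFunctionFinEquiv` reads digits little-endian and `qbit` big-endian, hence `Fin.revPerm`.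
def qbitEquiv (n : ℕ) : Fin (4 ^ n) ≃ (Fin (2 * n) → Fin 2) :=
  (finCongr (by rw [pow_mul]; norm_num)).trans
    (finFunctionFinEquiv.symm.trans (Equiv.arrowCongr Fin.revPerm (Equiv.refl _)))

theorem qbitEquiv_apply (n : ℕ) (j : Fin (4 ^ n)) : qbitEquiv n j = qbit (2 * n) j := by
  ext k
  simp [qbitEquiv, qbit, Nat.sub_sub, Nat.add_comm 1]

theorem kronPowQ_eq_submatrix (n : ℕ) (A : Fin (2 * n) → Matrix (Fin 2) (Fin 2) ℂ) :
    kronPowQ n A = (piKron A).submatrix (qbitEquiv n) (qbitEquiv n) := by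
  ext i j
  simp [kronPowQ, piKron, qbitEquiv_apply]

theorem kronPowQ_mul (n : ℕ) (A B : Fin (2 * n) → Matrix (Fin 2) (Fin 2) ℂ) :
    kronPowQ n A * kronPowQ n B = kronPowQ n fun k => A k * B k := by
  simp only [kronPowQ_eq_submatrix, submatrix_mul_equiv, piKron_mul]

theorem kronPowQ_transpose (n : ℕ) (A : Fin (2 * n) → Matrix (Fin 2) (Fin 2) ℂ) :
    (kronPowQ n A)ᵀ = kronPowQ n fun k => (A k)ᵀ := by
  simp only [kronPowQ_eq_submatrix, transpose_submatrix, piKron_transpose]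

theorem kronPowQ_map (n : ℕ) (f : ℂ →+* ℂ) (A : Fin (2 * n) → Matrix (Fin 2) (Fin 2) ℂ) :
    (kronPowQ n A).map f = kronPowQ n fun k => (A k).map f := by
  rw [kronPowQ_eq_submatrix, kronPowQ_eq_submatrix, ← submatrix_map, piKron_map]

theorem transpose_kronPowQ_mul_pauliY_mul_kronPowQ (n : ℕ)
    (A : Fin (2 * n) → Matrix (Fin 2) (Fin 2) ℂ) (hA : ∀ k, (A k).det = 1) :
    (kronPowQ n A)ᵀ * kronPowQ n (fun _ => pauliY) * kronPowQ n A = kronPowQ n fun _ => pauliY := by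
  simp only [kronPowQ_transpose, kronPowQ_mul, transpose_mul_pauliY_mul_self, hA, one_smul]

theorem nTangle_eq_of_vecQ_eq_mulVec (n : ℕ) (ψ φ : (Fin (2 * n) → Fin 2) → ℂ)
    (A : Fin (2 * n) → Matrix (Fin 2) (Fin 2) ℂ) (hA : ∀ k, (A k).det = 1)
    (hφ : vecQ n φ = kronPowQ n A *ᵥ vecQ n ψ) :
    nTangle n φ = nTangle n ψ := by
  have hconj : (fun j => starRingEnd ℂ (vecQ n φ j)) =
      kronPowQ n (fun k => (A k).map (starRingEnd ℂ)) *ᵥ fun j => starRingEnd ℂ (vecQ n ψ j) := by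
    funext j
    rw [hφ, RingHom.map_mulVec, kronPowQ_map]
    rfl
  have hAconj (k : Fin (2 * n)) : ((A k).map (starRingEnd ℂ)).det = 1 := by
    rw [← RingHom.mapMatrix_apply, ← RingHom.map_det, hA k, map_one]
  rw [nTangle, nTangle, hconj, dotProduct_mulVec_mulVec,
    transpose_kronPowQ_mul_pauliY_mul_kronPowQ n _ hAconj]

theorem n_tangle_slocc_invariant_general (n : ℕ)
    (ψ φ : (Fin (2 * n) → Fin 2) → ℂ)
    (A : Fin (2 * n) → Matrix (Fin 2) (Fin 2) ℂ) (hA : ∀ k, (A k).det = 1)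
    (hφ : vecQ n φ = (kronPowQ n A).mulVec (vecQ n ψ)) :
    nTangle n φ = nTangle n ψ ∧
      ∀ U : Fin (2 * n) → Matrix (Fin 2) (Fin 2) ℂ,
        (∀ k, U k ∈ Matrix.unitaryGroup (Fin 2) ℂ ∧ (U k).det = 1) →
        ∀ φ' : (Fin (2 * n) → Fin 2) → ℂ,
          vecQ n φ' = (kronPowQ n U).mulVec (vecQ n ψ) → nTangle n φ' = nTangle n ψ :=
  ⟨nTangle_eq_of_vecQ_eq_mulVec n ψ φ A hA hφ,
    fun U hU φ' hφ' => nTangle_eq_of_vecQ_eq_mulVec n ψ φ' U (fun k => (hU k).2) hφ'⟩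

/-- The `n`-tangle is SLOCC invariant: if `ψ` is a pure `2n`-qubit state,
`A_1,...,A_{2n} ∈ SL(2,ℂ)` and `|φ⟩ = (A_1 ⊗ ... ⊗ A_{2n})|ψ⟩`, then `τ_n(φ) = τ_n(ψ)`.
In particular `τ_n` is invariant under local unitary transformations `U_1 ⊗ ... ⊗ U_{2n}`
with each `U_k ∈ SU(2)`. -/
theorem n_tangle_slocc_invariant (n : ℕ) (hn : 1 ≤ n)
    (ψ φ : (Fin (2 * n) → Fin 2) → ℂ)
    (hψ : ∑ i, ‖ψ i‖ ^ 2 = 1)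
    (A : Fin (2 * n) → Matrix (Fin 2) (Fin 2) ℂ) (hA : ∀ k, (A k).det = 1)
    (hφ : vecQ n φ = (kronPowQ n A).mulVec (vecQ n ψ)) :
    nTangle n φ = nTangle n ψ ∧
      ∀ U : Fin (2 * n) → Matrix (Fin 2) (Fin 2) ℂ,
        (∀ k, U k ∈ Matrix.unitaryGroup (Fin 2) ℂ ∧ (U k).det = 1) →
        ∀ φ' : (Fin (2 * n) → Fin 2) → ℂ,
          vecQ n φ' = (kronPowQ n U).mulVec (vecQ n ψ) → nTangle n φ' = nTangle n ψ :=
  n_tangle_slocc_invariant_general n ψ φ A hA hφ
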